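/- Fix integers n ≥ 2 and m ≥ 1, and let r = min(m, n(n−1)/2). For ℓ ≥ 1, consider all integer tuples λ = (λ_{t,i,j})_{1≤t≤m, 1≤i<j≤n} with |λ_{t,i,j}| ≤ ℓ, and let G = G(n,m,λ). Then the proportion of such tuples for which rank(G') = r tends to 1 as ℓ → ∞. In particular, if m > n(n−1)/2, then the proportion of tuples for which {[a_i,a_j] : 1 ≤ i < j ≤ n} is a basis of the free abelian group G' (equivalently, the n(n−1)/2 vectors (λ_{1,i,j},…,λ_{m,i,j}) ∈ ℤ^m, i < j, are linearly independent) tends to 1 as ℓ → ∞. -/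

import Mathlib

open scoped commutatorElement

noncomputable def grpRank (G : Type*) [Group G] : ℕ :=
  sInf {k : ℕ | ∃ S : Finset G, S.card = k ∧ Subgroup.closure (S : Set G) = ⊤}

def IsTau2 (G : Type*) [Group G] : Prop :=
  Group.FG G ∧ (∀ g : G, g ≠ 1 → ¬IsOfFinOrder g) ∧ ∀ g h : G, ⁅g, h⁆ ∈ Subgroup.center G

def prodPow {G : Type*} [Group G] {k : ℕ} (v : Fin k → G) (e : Fin k → ℤ) : G :=
  (List.ofFn fun i => v i ^ e i).prod

def tau2Rels (n m : ℕ) (lam : Fin m → Fin n → Fin n → ℤ) :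
    Set (FreeGroup (Fin n ⊕ Fin m)) :=
  {r | (∃ i j : Fin n, i < j ∧
          r = ⁅(FreeGroup.of (Sum.inl i) : FreeGroup (Fin n ⊕ Fin m)),
              FreeGroup.of (Sum.inl j)⁆ *
              (prodPow (fun t : Fin m => FreeGroup.of (Sum.inr t)) (fun t => lam t i j))⁻¹) ∨
       (∃ (i : Fin n) (t : Fin m), r = ⁅(FreeGroup.of (Sum.inl i) : FreeGroup (Fin n ⊕ Fin m)),
              FreeGroup.of (Sum.inr t)⁆) ∨
       (∃ t s : Fin m, r = ⁅(FreeGroup.of (Sum.inr t) : FreeGroup (Fin n ⊕ Fin m)),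
              FreeGroup.of (Sum.inr s)⁆)}

def Tau2Group (n m : ℕ) (lam : Fin m → Fin n → Fin n → ℤ) : Type :=
  PresentedGroup (tau2Rels n m lam)

instance (n m : ℕ) (lam : Fin m → Fin n → Fin n → ℤ) : Group (Tau2Group n m lam) :=
  inferInstanceAs (Group (PresentedGroup (tau2Rels n m lam)))

def tau2a {n m : ℕ} {lam : Fin m → Fin n → Fin n → ℤ} (i : Fin n) : Tau2Group n m lam :=
  PresentedGroup.of (Sum.inl i)

def tau2c {n m : ℕ} {lam : Fin m → Fin n → Fin n → ℤ} (t : Fin m) : Tau2Group n m lam :=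
  PresentedGroup.of (Sum.inr t)

def IsCSmall {G : Type*} [Group G] (g : G) : Prop :=
  ∀ x : G, x ∈ Subgroup.centralizer {g} ↔
    ∃ (t : ℤ) (z : G), z ∈ Subgroup.center G ∧ x = g ^ t * z

def IsMalcevBasis {G : Type*} [Group G] {n m : ℕ} (a : Fin n → G) (c : Fin m → G) : Prop :=
  (∀ t, c t ∈ Subgroup.center G) ∧
  (commutator G ≤ Subgroup.closure (Set.range c)) ∧
  (∀ g : G, ∃! p : (Fin n → ℤ) × (Fin m → ℤ), g = prodPow a p.1 * prodPow c p.2)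

/-- Index type for the pairs 1 ≤ i < j ≤ n. -/
abbrev PairIdx (n : ℕ) := {p : Fin n × Fin n // p.1 < p.2}

/-- A tuple λ = (λ_{t,i,j})_{1≤t≤m, 1≤i<j≤n} of integers, repackaged as a function
Fin m → Fin n → Fin n → ℤ (entries with i ≥ j are irrelevant and set to 0). -/
def lamOf {n m : ℕ} (μ : Fin m → PairIdx n → ℤ) : Fin m → Fin n → Fin n → ℤ :=
  fun t i j => if h : i < j then μ t ⟨(i, j), h⟩ else 0

/-!
In `G = G(n,m,λ)` the `c_t` are central and `G'` is generated by the commutators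
`[a_i, a_j] = c^{v_{ij}}` with `v_{ij} = (λ_{1,i,j}, …, λ_{m,i,j})`. Mapping `G` to the
Heisenberg-type group `ℤⁿ × ℤᵐ` with cocycle `β(x, y) = ∑_{i<j} x_i y_j λ_{·,i,j}`, in which
`[x, y] = β(x, y) - β(y, x)`, shows `⟨C⟩ ≅ ℤᵐ`. Hence `G' ≅ span_ℤ {v_{ij}}`, and `rank G'` is the
rank of the `N × m` integer matrix `(v_{ij})`, `N = n(n-1)/2`. This rank is `r = min(m, N)` as
soon as one fixed `r × r` minor is nonzero. That minor is a nonzero polynomial in the entries of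
`λ`, so by the Schwartz–Zippel lemma it vanishes on a proportion `O(1/ℓ)` of the box
`[-ℓ, ℓ]^{mN}`. When `m > N`, rank `N` means exactly that the `v_{ij}` are linearly independent.
-/

open Finset Filter Topology

theorem card_Icc_neg_natCast (ℓ : ℕ) : #(Icc (-ℓ : ℤ) ℓ) = 2 * ℓ + 1 := by
  rw [Int.card_Icc]; omega

namespace MvPolynomial

variable {σ R : Type*} [Fintype σ] [DecidableEq σ] [CommRing R] [IsDomain R] [DecidableEq R]

theorem schwartz_zippel_totalDegree_of_fintype {p : MvPolynomial σ R} (hp : p ≠ 0)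
    (S : Finset R) :
    #{f ∈ Fintype.piFinset fun _ : σ ↦ S | eval f p = 0} / (#S ^ Fintype.card σ : ℚ≥0) ≤
      p.totalDegree / #S := by
  let e := Fintype.equivFin σ
  have hcard : #{f ∈ Fintype.piFinset fun _ : σ ↦ S | eval f p = 0} =
      #{g ∈ Fintype.piFinset fun _ ↦ S | eval g (rename e p) = 0} :=
    Finset.card_equiv (e.arrowCongr (Equiv.refl R)) fun f ↦ by
      simpa [eval_rename, Function.comp_def] using fun _ ↦ e.symm.forall_congr_right.symm
  rw [hcard]
  refine (schwartz_zippel_totalDegree ((rename_injective e e.injective).ne hp) S).trans ?_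
  gcongr
  exact totalDegree_rename_le e p

theorem tendsto_card_eval_ne_zero_div {p : MvPolynomial σ R} (hp : p ≠ 0) {S : ℕ → Finset R}
    (hS : Tendsto (fun ℓ ↦ #(S ℓ)) atTop atTop) :
    Tendsto (fun ℓ ↦ (#{x ∈ Fintype.piFinset fun _ ↦ S ℓ | eval x p ≠ 0} : ℝ) /
      (#(S ℓ) : ℝ) ^ Fintype.card σ) atTop (𝓝 1) := by
  have hzero : Tendsto (fun ℓ ↦ (#{x ∈ Fintype.piFinset fun _ ↦ S ℓ | eval x p = 0} : ℝ) /
      (#(S ℓ) : ℝ) ^ Fintype.card σ) atTop (𝓝 0) := by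
    refine squeeze_zero (fun ℓ ↦ by positivity) (fun ℓ ↦ ?_)
      ((tendsto_const_nhds (x := (p.totalDegree : ℝ))).div_atTop
        (tendsto_natCast_atTop_atTop.comp hS))
    have h := NNRat.cast_le (K := ℝ) |>.mpr (schwartz_zippel_totalDegree_of_fintype hp (S ℓ))
    push_cast at h
    exact h
  refine (tendsto_const_nhds.sub hzero).congr' ?_ |>.trans (by rw [sub_zero])
  filter_upwards [hS.eventually_gt_atTop 0] with ℓ hℓ
  have hsplit := Finset.card_filter_add_card_filter_not
    (s := Fintype.piFinset fun _ : σ ↦ S ℓ) (p := fun x ↦ eval x p = 0)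
  rw [Fintype.card_piFinset, prod_const, card_univ] at hsplit
  rw [eq_div_iff (by positivity), sub_mul, one_mul, div_mul_cancel₀ _ (by positivity)]
  have h := congrArg (Nat.cast (R := ℝ)) hsplit
  push_cast at h
  linarith

theorem tendsto_ncard_abs_le_div_of_eval_ne_zero {p : MvPolynomial σ ℤ} (hp : p ≠ 0)
    {Q : (σ → ℤ) → Prop} (hQ : ∀ x, eval x p ≠ 0 → Q x) :
    Tendsto (fun ℓ : ℕ ↦ (Set.ncard {x : σ → ℤ | (∀ s, |x s| ≤ ℓ) ∧ Q x} : ℝ) /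
      (2 * (ℓ : ℝ) + 1) ^ Fintype.card σ) atTop (𝓝 1) := by
  let box : ℕ → Finset (σ → ℤ) := fun ℓ ↦ Fintype.piFinset fun _ ↦ Icc (-ℓ : ℤ) ℓ
  have mem_box {ℓ : ℕ} {x : σ → ℤ} : x ∈ box ℓ ↔ ∀ s, |x s| ≤ ℓ := by
    simp [box, abs_le]
  have hcard (ℓ : ℕ) : (#(Icc (-ℓ : ℤ) ℓ) : ℝ) = 2 * ℓ + 1 := by
    rw [card_Icc_neg_natCast]; push_cast; ring
  have hsub (ℓ : ℕ) : {x : σ → ℤ | (∀ s, |x s| ≤ ℓ) ∧ Q x} ⊆ box ℓ :=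
    fun x hx ↦ mem_box.mpr hx.1
  have hgrow : Tendsto (fun ℓ : ℕ ↦ #(Icc (-ℓ : ℤ) ℓ)) atTop atTop := by
    simp_rw [card_Icc_neg_natCast]
    exact tendsto_atTop_mono (fun ℓ ↦ show ℓ ≤ 2 * ℓ + 1 by omega) tendsto_id
  refine tendsto_of_tendsto_of_tendsto_of_le_of_le (tendsto_card_eval_ne_zero_div hp hgrow)
    tendsto_const_nhds (fun ℓ ↦ ?_) (fun ℓ ↦ ?_)
  · rw [hcard]
    gcongr
    rw [← Set.ncard_coe_finset]
    refine Set.ncard_le_ncard (fun x hx ↦ ?_) ((box ℓ).finite_toSet.subset (hsub ℓ))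
    simp only [coe_filter, Set.mem_ofPred_eq] at hx
    exact ⟨mem_box.mp hx.1, hQ x hx.2⟩
  · rw [div_le_one (by positivity), ← hcard, ← Nat.cast_pow, ← Finset.card_univ (α := σ),
      ← prod_const, ← Fintype.card_piFinset, Nat.cast_le, ← Set.ncard_coe_finset]
    exact Set.ncard_le_ncard (hsub ℓ)

end MvPolynomial

section Minors

variable {R : Type*} [CommRing R]

theorem finrank_span_range_eq_of_det_ne_zero [IsDomain R] {ι κ : Type*} [Fintype ι] [Fintype κ]
    {r : ℕ} (v : ι → κ → R) {ρ : Fin r → ι} {τ : Fin r → κ}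
    (hdet : (Matrix.of fun i j ↦ v (ρ j) (τ i)).det ≠ 0)
    (hr : r = min (Fintype.card κ) (Fintype.card ι)) :
    Module.finrank R (Submodule.span R (Set.range v)) = r := by
  have : Module.Finite R (Submodule.span R (Set.range v)) :=
    Module.Finite.span_of_finite R (Set.finite_range v)
  apply le_antisymm
  · rw [hr]
    refine le_min ?_ (finrank_range_le_card v)
    exact (Submodule.finrank_le _).trans (Module.finrank_fintype_fun_eq_card R).le
  · have hli : LinearIndependent R (v ∘ ρ) :=
      .of_comp (LinearMap.funLeft R R τ) (Matrix.linearIndependent_cols_of_det_ne_zero hdet)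
    calc r = Module.finrank R (Submodule.span R (Set.range (v ∘ ρ))) := by
          rw [finrank_span_eq_card hli, Fintype.card_fin]
      _ ≤ _ := Submodule.finrank_mono (Submodule.span_mono (Set.range_comp_subset_range ρ v))

open MvPolynomial in
noncomputable def minorDetPoly {α β : Type*} {r : ℕ} (ρ : Fin r → α) (τ : Fin r → β) :
    MvPolynomial (α × β) R :=
  rename (Prod.map ρ τ) (Matrix.mvPolynomialX (Fin r) (Fin r) R).det

theorem eval_minorDetPoly {α β : Type*} {r : ℕ} (ρ : Fin r → α) (τ : Fin r → β)
    (x : α × β → R) :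
    MvPolynomial.eval x (minorDetPoly ρ τ) = (Matrix.of fun i j ↦ x (ρ i, τ j)).det := by
  rw [minorDetPoly, MvPolynomial.eval_rename, Matrix.eval_det_mvPolynomialX]
  rfl

theorem minorDetPoly_ne_zero [Nontrivial R] {α β : Type*} {r : ℕ} {ρ : Fin r → α} {τ : Fin r → β}
    (hρ : Function.Injective ρ) (hτ : Function.Injective τ) :
    minorDetPoly (R := R) ρ τ ≠ 0 :=
  (MvPolynomial.rename_injective _ (hρ.prodMap hτ)).ne_iff' (map_zero _) |>.mpr
    (Matrix.det_mvPolynomialX_ne_zero _ _)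

end Minors

theorem tendsto_ncard_div_of_finrank_span_eq_min {ι κ : Type*} [Fintype ι] [Fintype κ]
    {d : ℕ} (hd : Fintype.card κ * Fintype.card ι = d) {Q : (κ → ι → ℤ) → Prop}
    (hQ : ∀ μ, Module.finrank ℤ (Submodule.span ℤ (Set.range fun p t ↦ μ t p)) =
      min (Fintype.card κ) (Fintype.card ι) → Q μ) :
    Tendsto (fun ℓ : ℕ ↦ (Set.ncard {μ : κ → ι → ℤ | (∀ t p, |μ t p| ≤ ℓ) ∧ Q μ} : ℝ) /
      (2 * (ℓ : ℝ) + 1) ^ d) atTop (𝓝 1) := by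
  classical
  set r := min (Fintype.card κ) (Fintype.card ι)
  obtain ⟨τ⟩ := Function.Embedding.nonempty_of_card_le (α := Fin r) (β := κ) (by simp [r])
  obtain ⟨ρ⟩ := Function.Embedding.nonempty_of_card_le (α := Fin r) (β := ι) (by simp [r])
  have h := MvPolynomial.tendsto_ncard_abs_le_div_of_eval_ne_zero
    (minorDetPoly_ne_zero τ.injective ρ.injective) (Q := fun x ↦ Q (Function.curry x))
    fun x hx ↦ hQ _ <| finrank_span_range_eq_of_det_ne_zero _
      (by rwa [eval_minorDetPoly] at hx) rfl
  rw [Fintype.card_prod, hd] at h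
  refine h.congr fun ℓ ↦ ?_
  congr 2
  refine .trans ?_ (Set.ncard_preimage_of_injective_subset_range Function.curry_injective
    fun μ _ ↦ (Equiv.curry κ ι ℤ).surjective μ)
  congr 1
  ext x
  simp [Prod.forall]

section GroupRank

theorem generatingSet_card_subset {G H : Type*} [Group G] [Group H] (e : G ≃* H) :
    {k | ∃ S : Finset G, S.card = k ∧ Subgroup.closure (S : Set G) = ⊤} ⊆
      {k | ∃ S : Finset H, S.card = k ∧ Subgroup.closure (S : Set H) = ⊤} := by
  rintro k ⟨S, rfl, hS⟩
  refine ⟨S.map e.toEquiv.toEmbedding, Finset.card_map _, ?_⟩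
  rw [Finset.coe_map, Equiv.coe_toEmbedding, MulEquiv.toEquiv_eq_coe, MulEquiv.coe_toEquiv,
    ← MulEquiv.coe_toMonoidHom, ← MonoidHom.map_closure, hS,
    Subgroup.map_top_of_surjective _ e.surjective]

theorem grpRank_congr {G H : Type*} [Group G] [Group H] (e : G ≃* H) :
    grpRank G = grpRank H :=
  congrArg sInf ((generatingSet_card_subset e).antisymm (generatingSet_card_subset e.symm))

theorem mem_closure_toAdd_preimage_iff {M : Type*} [AddCommGroup M] {s : Set M}
    {x : Multiplicative M} :
    x ∈ Subgroup.closure (Multiplicative.toAdd ⁻¹' s) ↔ x.toAdd ∈ Submodule.span ℤ s := by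
  rw [← AddSubgroup.toSubgroup_closure, ← Submodule.span_int_eq_addSubgroupClosure]
  rfl

theorem closure_eq_top_iff_span_eq_top {M : Type*} [AddCommGroup M] (s : Set M) :
    Subgroup.closure (Multiplicative.toAdd ⁻¹' s) = ⊤ ↔ Submodule.span ℤ s = ⊤ := by
  rw [← AddSubgroup.toSubgroup_closure, ← Submodule.span_int_eq_addSubgroupClosure,
    ← AddSubgroup.toSubgroup.map_top, AddSubgroup.toSubgroup.injective.eq_iff,
    Submodule.toAddSubgroup_eq_top]

theorem grpRank_multiplicative (M : Type*) [AddCommGroup M] [Module.Free ℤ M] :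
    grpRank (Multiplicative M) = Module.finrank ℤ M := by
  rw [Module.finrank_eq_spanFinrank_of_free, grpRank, Submodule.spanFinrank_eq_iInf, iInf]
  congr 1
  ext k
  constructor
  · rintro ⟨S, rfl, hS⟩
    refine ⟨⟨S.map Multiplicative.toAdd.toEmbedding, ?_⟩, Finset.card_map _⟩
    rw [← closure_eq_top_iff_span_eq_top, Finset.coe_map, Equiv.coe_toEmbedding,
      Equiv.image_eq_preimage_symm]
    exact hS
  · rintro ⟨⟨S, hS⟩, rfl⟩
    refine ⟨S.map Multiplicative.ofAdd.toEmbedding, Finset.card_map _, ?_⟩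
    rw [Finset.coe_map, Equiv.coe_toEmbedding, Equiv.image_eq_preimage_symm]
    exact (closure_eq_top_iff_span_eq_top _).mpr hS

theorem grpRank_closure_toAdd_preimage {M : Type*} [AddCommGroup M] (s : Set M)
    [Module.Free ℤ (Submodule.span ℤ s)] :
    grpRank (Subgroup.closure (Multiplicative.toAdd ⁻¹' s)) =
      Module.finrank ℤ (Submodule.span ℤ s) := by
  rw [← grpRank_multiplicative]
  exact grpRank_congr
    { toFun x := .ofAdd ⟨x.1.toAdd, mem_closure_toAdd_preimage_iff.mp x.2⟩
      invFun y := ⟨.ofAdd y.toAdd, mem_closure_toAdd_preimage_iff.mpr y.toAdd.2⟩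
      left_inv _ := rfl
      right_inv _ := rfl
      map_mul' _ _ := rfl }

end GroupRank

section Generalities

variable {G H : Type*} [Group G] [Group H]

theorem map_prodPow (F : G →* H) {k : ℕ} (v : Fin k → G) (e : Fin k → ℤ) :
    F (prodPow v e) = prodPow (F ∘ v) e := by
  simp [prodPow, map_list_prod, List.map_ofFn, Function.comp_def]

theorem prodPow_eq_prod {A : Type*} [CommGroup A] {k : ℕ} (v : Fin k → A) (e : Fin k → ℤ) :
    prodPow v e = ∏ i, v i ^ e i :=
  List.prod_ofFn

theorem prodPow_ofAdd_single {k : ℕ} (e : Fin k → ℤ) :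
    prodPow (fun i ↦ Multiplicative.ofAdd (Pi.single i (1 : ℤ))) e = Multiplicative.ofAdd e := by
  rw [prodPow_eq_prod]
  apply Multiplicative.toAdd.injective
  ext i
  simp [toAdd_prod, Finset.sum_apply, Pi.single_apply]

theorem Subgroup.normal_of_le_center {K : Subgroup G} (hK : K ≤ Subgroup.center G) : K.Normal :=
  ⟨fun k hk g ↦ by rwa [Subgroup.mem_center_iff.mp (hK hk) g, mul_inv_cancel_right]⟩

theorem commutator_le_of_closure_eq_top {s : Set G} (hs : Subgroup.closure s = ⊤)
    {K : Subgroup G} [K.Normal] (hK : ∀ x ∈ s, ∀ y ∈ s, ⁅x, y⁆ ∈ K) : commutator G ≤ K := by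
  let π := QuotientGroup.mk' K
  have hcomm (x y : G) : Commute (π x) (π y) := by
    induction (hs ▸ Subgroup.mem_top x : x ∈ Subgroup.closure s),
      (hs ▸ Subgroup.mem_top y : y ∈ Subgroup.closure s) using Subgroup.closure_induction₂ with
    | mem x y hx hy =>
      rw [← commutatorElement_eq_one_iff_commute, ← map_commutatorElement,
        QuotientGroup.mk'_apply, QuotientGroup.eq_one_iff]
      exact hK x hx y hy
    | one_left => simp
    | one_right => simp
    | mul_left _ _ _ _ _ _ h₁ h₂ => simpa using h₁.mul_left h₂
    | mul_right _ _ _ _ _ _ h₁ h₂ => simpa using h₁.mul_right h₂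
    | inv_left _ _ _ _ h => simpa using h.inv_left
    | inv_right _ _ _ _ h => simpa using h.inv_right
  rw [commutator_def, Subgroup.commutator_le]
  intro x _ y _
  rw [← QuotientGroup.eq_one_iff, ← QuotientGroup.mk'_apply, map_commutatorElement,
    commutatorElement_eq_one_iff_commute]
  exact hcomm x y

end Generalities

@[ext]
structure BilinearExtension {A C : Type*} [AddCommGroup A] [AddCommGroup C]
    (β : A →+ A →+ C) where
  fst : A
  snd : C

namespace BilinearExtension

variable {A C : Type*} [AddCommGroup A] [AddCommGroup C] {β : A →+ A →+ C}

instance : Group (BilinearExtension β) where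
  mul x y := ⟨x.fst + y.fst, x.snd + y.snd + β x.fst y.fst⟩
  one := ⟨0, 0⟩
  inv x := ⟨-x.fst, β x.fst x.fst - x.snd⟩
  mul_assoc x y z := by
    ext
    · exact add_assoc ..
    · change x.snd + y.snd + β x.fst y.fst + z.snd + β (x.fst + y.fst) z.fst =
        x.snd + (y.snd + z.snd + β y.fst z.fst) + β x.fst (y.fst + z.fst)
      simp only [map_add, AddMonoidHom.add_apply]
      abel
  one_mul x := by
    ext
    · exact zero_add _
    · change 0 + x.snd + β 0 x.fst = x.snd
      simp
  mul_one x := by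
    ext
    · exact add_zero _
    · change x.snd + 0 + β x.fst 0 = x.snd
      simp
  inv_mul_cancel x := by
    ext
    · exact neg_add_cancel _
    · change β x.fst x.fst - x.snd + x.snd + β (-x.fst) x.fst = 0
      simp

@[simp]
theorem fst_mul (x y : BilinearExtension β) : (x * y).fst = x.fst + y.fst := rfl

@[simp]
theorem snd_mul (x y : BilinearExtension β) :
    (x * y).snd = x.snd + y.snd + β x.fst y.fst := rfl

@[simp]
theorem fst_inv (x : BilinearExtension β) : x⁻¹.fst = -x.fst := rfl

@[simp]
theorem snd_inv (x : BilinearExtension β) : x⁻¹.snd = β x.fst x.fst - x.snd := rfl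

theorem commutatorElement_eq (x y : BilinearExtension β) :
    ⁅x, y⁆ = ⟨0, β x.fst y.fst - β y.fst x.fst⟩ := by
  rw [commutatorElement_def]
  ext
  · simp
  · simp only [snd_mul, fst_mul, snd_inv, fst_inv, map_add, map_neg, AddMonoidHom.add_apply,
      AddMonoidHom.neg_apply]
    abel

def ofCenter (β : A →+ A →+ C) : Multiplicative C →* BilinearExtension β where
  toFun c := ⟨0, c.toAdd⟩
  map_one' := rfl
  map_mul' c d := by
    ext
    · exact (add_zero 0).symm
    · change c.toAdd + d.toAdd = c.toAdd + d.toAdd + β 0 0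
      simp

theorem commutatorElement_ofCenter_right (x : BilinearExtension β) (c : Multiplicative C) :
    ⁅x, ofCenter β c⁆ = 1 := by
  rw [commutatorElement_eq]
  ext <;> simp [ofCenter] <;> rfl

theorem ofCenter_injective : Function.Injective (ofCenter β) :=
  fun _ _ h ↦ congrArg BilinearExtension.snd h

end BilinearExtension

namespace Tau2Group

variable {n m : ℕ} {lam : Fin m → Fin n → Fin n → ℤ}

theorem commutatorElement_tau2a {i j : Fin n} (hij : i < j) :
    ⁅(tau2a i : Tau2Group n m lam), tau2a (lam := lam) j⁆ = prodPow tau2c fun t ↦ lam t i j := by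
  have h := PresentedGroup.mk_eq_mk_of_mul_inv_mem (rels := tau2Rels n m lam)
    (Or.inl ⟨i, j, hij, rfl⟩)
  rwa [map_commutatorElement, map_prodPow] at h

theorem commute_tau2a_tau2c (i : Fin n) (t : Fin m) :
    Commute (tau2a i : Tau2Group n m lam) (tau2c t) := by
  have h := PresentedGroup.one_of_mem (rels := tau2Rels n m lam) (Or.inr (Or.inl ⟨i, t, rfl⟩))
  rwa [map_commutatorElement, commutatorElement_eq_one_iff_commute] at h

theorem commute_tau2c_tau2c (t s : Fin m) :
    Commute (tau2c t : Tau2Group n m lam) (tau2c s) := by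
  have h := PresentedGroup.one_of_mem (rels := tau2Rels n m lam) (Or.inr (Or.inr ⟨t, s, rfl⟩))
  rwa [map_commutatorElement, commutatorElement_eq_one_iff_commute] at h

theorem closure_range_tau2a_union_range_tau2c :
    Subgroup.closure (Set.range (tau2a : Fin n → Tau2Group n m lam) ∪ Set.range tau2c) = ⊤ := by
  rw [← Set.Sum.elim_range, show Sum.elim tau2a tau2c = PresentedGroup.of by ext (_ | _) <;> rfl]
  exact PresentedGroup.closure_range_of _

theorem tau2c_mem_center (t : Fin m) : (tau2c t : Tau2Group n m lam) ∈ Subgroup.center _ := by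
  have h : Subgroup.closure (Set.range (tau2a : Fin n → Tau2Group n m lam) ∪ Set.range tau2c) ≤
      Subgroup.centralizer {tau2c t} := by
    rw [Subgroup.closure_le]
    rintro _ (⟨i, rfl⟩ | ⟨s, rfl⟩) _ rfl
    · exact (commute_tau2a_tau2c i t).symm
    · exact (commute_tau2c_tau2c s t).symm
  rw [closure_range_tau2a_union_range_tau2c] at h
  exact Subgroup.mem_center_iff.mpr fun g ↦ (h (Subgroup.mem_top g) _ rfl).symm

def cocycle (lam : Fin m → Fin n → Fin n → ℤ) :
    (Fin n → ℤ) →+ (Fin n → ℤ) →+ (Fin m → ℤ) :=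
  AddMonoidHom.mk' (fun x ↦ AddMonoidHom.mk' (fun y t ↦ ∑ i, ∑ j ∈ Ioi i, x i * y j * lam t i j)
    fun y y' ↦ by ext; simp [mul_add, add_mul, sum_add_distrib])
    fun x x' ↦ by ext; simp [add_mul, sum_add_distrib]

theorem cocycle_single (i j : Fin n) :
    cocycle lam (Pi.single i 1) (Pi.single j 1) = fun t ↦ if i < j then lam t i j else 0 := by
  ext t
  simp [cocycle, Pi.single_apply]

def modelGen (lam : Fin m → Fin n → Fin n → ℤ) : Fin n ⊕ Fin m → BilinearExtension (cocycle lam) :=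
  Sum.elim (fun i ↦ ⟨Pi.single i 1, 0⟩)
    fun t ↦ BilinearExtension.ofCenter _ (Multiplicative.ofAdd (Pi.single t 1))

theorem commutatorElement_modelGen_inl {i j : Fin n} (hij : i < j) :
    ⁅modelGen lam (.inl i), modelGen lam (.inl j)⁆ =
      BilinearExtension.ofCenter _ (Multiplicative.ofAdd fun t ↦ lam t i j) := by
  rw [modelGen, Sum.elim_inl, Sum.elim_inl, BilinearExtension.commutatorElement_eq,
    cocycle_single, cocycle_single]
  ext
  · rfl
  · simp [BilinearExtension.ofCenter, hij, hij.not_gt]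

theorem prodPow_modelGen_inr (u : Fin m → ℤ) :
    prodPow (fun t ↦ modelGen lam (.inr t)) u =
      BilinearExtension.ofCenter _ (Multiplicative.ofAdd u) := by
  rw [← prodPow_ofAdd_single, map_prodPow]
  rfl

theorem lift_modelGen_eq_one : ∀ r ∈ tau2Rels n m lam, FreeGroup.lift (modelGen lam) r = 1 := by
  rintro r (⟨i, j, hij, rfl⟩ | ⟨i, t, rfl⟩ | ⟨t, s, rfl⟩)
  · rw [map_mul, map_inv, map_commutatorElement, map_prodPow, mul_inv_eq_one]
    simp only [Function.comp_def, FreeGroup.lift_apply_of]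
    rw [commutatorElement_modelGen_inl hij, prodPow_modelGen_inr]
  all_goals
    rw [map_commutatorElement, FreeGroup.lift_apply_of, FreeGroup.lift_apply_of]
    exact BilinearExtension.commutatorElement_ofCenter_right _ _

def toModel (lam : Fin m → Fin n → Fin n → ℤ) :
    Tau2Group n m lam →* BilinearExtension (cocycle lam) :=
  PresentedGroup.toGroup lift_modelGen_eq_one

theorem toModel_prodPow_tau2c (u : Fin m → ℤ) :
    toModel lam (prodPow tau2c u) = BilinearExtension.ofCenter _ (Multiplicative.ofAdd u) := by
  rw [map_prodPow, ← prodPow_modelGen_inr]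
  congr 1
  funext t
  exact PresentedGroup.toGroup.of _

open scoped IsMulCommutative in
def centralHom (lam : Fin m → Fin n → Fin n → ℤ) :
    Multiplicative (Fin m → ℤ) →* Subgroup.center (Tau2Group n m lam) where
  toFun u := ∏ t, (⟨tau2c t, tau2c_mem_center t⟩ : Subgroup.center _) ^ u.toAdd t
  map_one' := by simp
  map_mul' u v := by simp [zpow_add, prod_mul_distrib]

open scoped IsMulCommutative in
theorem coe_centralHom (u : Multiplicative (Fin m → ℤ)) :
    (centralHom lam u : Tau2Group n m lam) = prodPow tau2c u.toAdd := by
  change (Subgroup.center _).subtype (∏ t, _) = _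
  rw [← prodPow_eq_prod, map_prodPow]
  rfl

theorem centralHom_injective : Function.Injective (centralHom lam) := by
  intro u v h
  have h' := congrArg (toModel lam ∘ Subtype.val) h
  simp only [Function.comp_apply, coe_centralHom, toModel_prodPow_tau2c] at h'
  exact BilinearExtension.ofCenter_injective h'

def lamVec (lam : Fin m → Fin n → Fin n → ℤ) (p : PairIdx n) : Fin m → ℤ :=
  fun t ↦ lam t p.1.1 p.1.2

theorem commutatorElement_tau2a_eq_centralHom {i j : Fin n} (hij : i < j) :
    ⁅(tau2a i : Tau2Group n m lam), tau2a (lam := lam) j⁆ =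
      centralHom lam (Multiplicative.ofAdd (lamVec lam ⟨(i, j), hij⟩)) := by
  rw [coe_centralHom, commutatorElement_tau2a hij]
  rfl

theorem commutator_eq_map_closure : commutator (Tau2Group n m lam) =
    (Subgroup.closure (Multiplicative.toAdd ⁻¹' Set.range (lamVec lam))).map
      ((Subgroup.center _).subtype.comp (centralHom lam)) := by
  set K := (Subgroup.closure (Multiplicative.toAdd ⁻¹' Set.range (lamVec lam))).map
      ((Subgroup.center _).subtype.comp (centralHom lam))
  have hK : K ≤ Subgroup.center _ := by
    rintro _ ⟨u, -, rfl⟩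
    exact (centralHom lam u).2
  have : K.Normal := Subgroup.normal_of_le_center hK
  have mem_K {i j : Fin n} (hij : i < j) : ⁅(tau2a i : Tau2Group n m lam), tau2a j⁆ ∈ K := by
    rw [commutatorElement_tau2a_eq_centralHom hij]
    exact Subgroup.mem_map_of_mem _ (Subgroup.subset_closure ⟨_, rfl⟩)
  apply le_antisymm
  · refine commutator_le_of_closure_eq_top closure_range_tau2a_union_range_tau2c ?_
    rintro _ (⟨i, rfl⟩ | ⟨s, rfl⟩) _ (⟨j, rfl⟩ | ⟨t, rfl⟩)
    · rcases lt_trichotomy i j with h | rfl | h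
      · exact mem_K h
      · rw [commutatorElement_self]
        exact K.one_mem
      · rw [← commutatorElement_inv]
        exact K.inv_mem (mem_K h)
    · rw [commutatorElement_eq_one_iff_commute.mpr (commute_tau2a_tau2c i t)]
      exact K.one_mem
    · rw [commutatorElement_eq_one_iff_commute.mpr (commute_tau2a_tau2c j s).symm]
      exact K.one_mem
    · rw [commutatorElement_eq_one_iff_commute.mpr (commute_tau2c_tau2c s t)]
      exact K.one_mem
  · rw [Subgroup.map_le_iff_le_comap, Subgroup.closure_le]
    rintro u ⟨⟨⟨i, j⟩, hij⟩, hu⟩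
    obtain rfl : u = Multiplicative.ofAdd (lamVec lam ⟨(i, j), hij⟩) := by rw [hu]; rfl
    rw [SetLike.mem_coe, Subgroup.mem_comap, MonoidHom.comp_apply, Subgroup.coe_subtype,
      ← commutatorElement_tau2a_eq_centralHom hij]
    exact Subgroup.commutator_mem_commutator (Subgroup.mem_top _) (Subgroup.mem_top _)

theorem grpRank_commutator (lam : Fin m → Fin n → Fin n → ℤ) :
    grpRank (commutator (Tau2Group n m lam)) =
      Module.finrank ℤ (Submodule.span ℤ (Set.range (lamVec lam))) := by
  rw [grpRank_congr (MulEquiv.subgroupCongr commutator_eq_map_closure),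
    ← grpRank_congr (Subgroup.equivMapOfInjective _ _
      (Subtype.val_injective.comp centralHom_injective)),
    grpRank_closure_toAdd_preimage]

end Tau2Group

theorem card_pairIdx (n : ℕ) : Fintype.card (PairIdx n) = n * (n - 1) / 2 := by
  rw [Fintype.card_subtype, Fintype.card_product_filter_lt, Fintype.card_fin,
    Nat.choose_two_right]

theorem lamVec_lamOf {n m : ℕ} (μ : Fin m → PairIdx n → ℤ) :
    Tau2Group.lamVec (lamOf μ) = fun p t ↦ μ t p := by
  ext p t
  simp [Tau2Group.lamVec, lamOf, p.2]

theorem stmt17_general (n m : ℕ) :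
    Filter.Tendsto (fun ℓ : ℕ =>
      (Set.ncard {μ : Fin m → PairIdx n → ℤ |
          (∀ t p, |μ t p| ≤ (ℓ : ℤ)) ∧
          grpRank ↥(commutator (Tau2Group n m (lamOf μ))) = min m (n * (n - 1) / 2)} : ℝ) /
        (2 * (ℓ : ℝ) + 1) ^ (m * (n * (n - 1) / 2)))
      Filter.atTop (nhds 1) ∧
    (n * (n - 1) / 2 < m →
      Filter.Tendsto (fun ℓ : ℕ =>
        (Set.ncard {μ : Fin m → PairIdx n → ℤ |
            (∀ t p, |μ t p| ≤ (ℓ : ℤ)) ∧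
            LinearIndependent ℤ (fun p : PairIdx n => (fun t : Fin m => μ t p))} : ℝ) /
          (2 * (ℓ : ℝ) + 1) ^ (m * (n * (n - 1) / 2)))
        Filter.atTop (nhds 1)) := by
  have hd : Fintype.card (Fin m) * Fintype.card (PairIdx n) = m * (n * (n - 1) / 2) := by
    rw [Fintype.card_fin, card_pairIdx]
  constructor
  · refine tendsto_ncard_div_of_finrank_span_eq_min hd fun μ hμ ↦ ?_
    rw [Tau2Group.grpRank_commutator, lamVec_lamOf, hμ, Fintype.card_fin, card_pairIdx]
  · intro hlt
    refine tendsto_ncard_div_of_finrank_span_eq_min hd fun μ hμ ↦ ?_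
    rw [linearIndependent_iff_card_eq_finrank_span, Set.finrank, hμ, Fintype.card_fin,
      min_eq_right (card_pairIdx n ▸ hlt.le)]

/-- Fix n ≥ 2, m ≥ 1 and let r = min m (n(n−1)/2). Among the tuples λ with
|λ_{t,i,j}| ≤ ℓ, the proportion of those with rank(G') = r tends to 1 as ℓ → ∞. In
particular if m > n(n−1)/2, the proportion of those for which {[aᵢ,aⱼ] : i < j} is a
basis of the free abelian group G' — equivalently, the vectors
(λ_{1,i,j},…,λ_{m,i,j}) ∈ ℤᵐ (i < j) are linearly independent — tends to 1. -/
theorem stmt17 (n m : ℕ) (hn : 2 ≤ n) (hm : 1 ≤ m) :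
    Filter.Tendsto (fun ℓ : ℕ =>
      (Set.ncard {μ : Fin m → PairIdx n → ℤ |
          (∀ t p, |μ t p| ≤ (ℓ : ℤ)) ∧
          grpRank ↥(commutator (Tau2Group n m (lamOf μ))) = min m (n * (n - 1) / 2)} : ℝ) /
        (2 * (ℓ : ℝ) + 1) ^ (m * (n * (n - 1) / 2)))
      Filter.atTop (nhds 1) ∧
    (n * (n - 1) / 2 < m →
      Filter.Tendsto (fun ℓ : ℕ =>
        (Set.ncard {μ : Fin m → PairIdx n → ℤ |
            (∀ t p, |μ t p| ≤ (ℓ : ℤ)) ∧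
            LinearIndependent ℤ (fun p : PairIdx n => (fun t : Fin m => μ t p))} : ℝ) /
          (2 * (ℓ : ℝ) + 1) ^ (m * (n * (n - 1) / 2)))
        Filter.atTop (nhds 1)) :=
  stmt17_general n m
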